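/- arXiv:2409.10620 — 5 statements merged into one kernel-verified Lean document; each statement's English description precedes it below -/
import Mathlib

section
/- Let G be a simple graph on at least 2 vertices such that every edge lies in a unique triangle and every non-adjacent pair of distinct vertices has exactly two common neighbors. Then G is regular, i.e., all vertices have the same degree. -/
open SimpleGraph

/-- Matching lemma: for an edge `a b` with unique common neighbor `c`, every
neighbor `x` of `a` other than `b, c` has a unique partner among neighbors of `b`. -/
lemma match_lemma {V : Type*} [Fintype V] [DecidableEq V] (G : SimpleGraph V)
    [DecidableRel G.Adj]
    (htri : ∀ a b : V, G.Adj a b → (G.commonNeighbors a b).ncard = 1)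
    (hquad : ∀ a b : V, a ≠ b → ¬ G.Adj a b → (G.commonNeighbors a b).ncard = 2)
    {a b c : V} (hab : G.Adj a b) (hc : G.commonNeighbors a b = {c})
    {x : V} (hxa : G.Adj a x) (hxb : x ≠ b) (hxc : x ≠ c) :
    ∃ y, G.Adj b y ∧ y ≠ a ∧ y ≠ c ∧ G.Adj x y ∧
      ∀ y', G.Adj b y' → y' ≠ a → G.Adj x y' → y' = y := by
  have hxnb : ¬ G.Adj x b := by
    intro h
    have hx : x ∈ G.commonNeighbors a b := ⟨hxa, h.symm⟩
    rw [hc] at hx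
    exact hxc hx
  have h2 := hquad x b hxb hxnb
  obtain ⟨u, v, huv, hset⟩ := Set.ncard_eq_two.mp h2
  have ha : a ∈ G.commonNeighbors x b := ⟨hxa.symm, hab.symm⟩
  rw [hset] at ha
  -- let y be the element of {u,v} other than a
  obtain hau | hav := ha
  · -- a = u, take y = v
    subst hau
    refine ⟨v, ?_, ?_, ?_, ?_, ?_⟩
    · have hv : v ∈ G.commonNeighbors x b := by rw [hset]; right; rfl
      exact hv.2
    · exact fun h => huv h.symm
    · -- v ≠ c
      intro hvc
      have hv : v ∈ G.commonNeighbors x b := by rw [hset]; right; rfl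
      have hac : G.Adj a c := by
        have : c ∈ G.commonNeighbors a b := by rw [hc]; rfl
        exact this.1
      obtain ⟨z, hz⟩ := Set.ncard_eq_one.mp (htri a c hac)
      have hbz : b ∈ G.commonNeighbors a c := by
        have : c ∈ G.commonNeighbors a b := by rw [hc]; rfl
        exact ⟨hab, this.2.symm⟩
      have hxz : x ∈ G.commonNeighbors a c := ⟨hxa, by rw [← hvc]; exact hv.1.symm⟩
      rw [hz] at hbz hxz
      exact hxb (hxz.trans hbz.symm)
    · have hv : v ∈ G.commonNeighbors x b := by rw [hset]; right; rfl
      exact hv.1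
    · intro y' hby' hy'a hxy'
      have : y' ∈ G.commonNeighbors x b := ⟨hxy', hby'⟩
      rw [hset] at this
      rcases this with h | h
      · exact absurd h hy'a
      · exact h
  · -- a = v, take y = u
    subst hav
    refine ⟨u, ?_, ?_, ?_, ?_, ?_⟩
    · have hu : u ∈ G.commonNeighbors x b := by rw [hset]; left; rfl
      exact hu.2
    · exact fun h => huv h
    · intro huc
      have hu : u ∈ G.commonNeighbors x b := by rw [hset]; left; rfl
      have hac : G.Adj a c := by
        have : c ∈ G.commonNeighbors a b := by rw [hc]; rfl
        exact this.1
      obtain ⟨z, hz⟩ := Set.ncard_eq_one.mp (htri a c hac)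
      have hbz : b ∈ G.commonNeighbors a c := by
        have : c ∈ G.commonNeighbors a b := by rw [hc]; rfl
        exact ⟨hab, this.2.symm⟩
      have hxz : x ∈ G.commonNeighbors a c := ⟨hxa, by rw [← huc]; exact hu.1.symm⟩
      rw [hz] at hbz hxz
      exact hxb (hxz.trans hbz.symm)
    · have hu : u ∈ G.commonNeighbors x b := by rw [hset]; left; rfl
      exact hu.1
    · intro y' hby' hy'a hxy'
      have : y' ∈ G.commonNeighbors x b := ⟨hxy', hby'⟩
      rw [hset] at this
      rcases this with h | h
      · exact h
      · exact absurd h hy'a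

lemma adj_deg {V : Type*} [Fintype V] [DecidableEq V] (G : SimpleGraph V)
    [DecidableRel G.Adj]
    (htri : ∀ a b : V, G.Adj a b → (G.commonNeighbors a b).ncard = 1)
    (hquad : ∀ a b : V, a ≠ b → ¬ G.Adj a b → (G.commonNeighbors a b).ncard = 2)
    {a b : V} (hab : G.Adj a b) : G.degree a = G.degree b := by
  obtain ⟨c, hc⟩ := Set.ncard_eq_one.mp (htri a b hab)
  have hc' : G.commonNeighbors b a = {c} := by
    rw [commonNeighbors_symm]; exact hc
  have hcmem : c ∈ G.commonNeighbors a b := by rw [hc]; rfl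
  have hac : G.Adj a c := hcmem.1
  have hbc : G.Adj b c := hcmem.2
  set A : Finset V := ((G.neighborFinset a).erase b).erase c with hA
  set B : Finset V := ((G.neighborFinset b).erase a).erase c with hB
  have memA : ∀ x, x ∈ A ↔ G.Adj a x ∧ x ≠ b ∧ x ≠ c := by
    intro x
    simp only [hA, Finset.mem_erase, mem_neighborFinset]
    tauto
  have memB : ∀ y, y ∈ B ↔ G.Adj b y ∧ y ≠ a ∧ y ≠ c := by
    intro y
    simp only [hB, Finset.mem_erase, mem_neighborFinset]
    tauto
  have hcard : A.card = B.card := by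
    refine Finset.card_bij
      (fun x hx => (match_lemma G htri hquad hab hc ((memA x).mp hx).1
        ((memA x).mp hx).2.1 ((memA x).mp hx).2.2).choose) ?_ ?_ ?_
    · intro x hx
      obtain ⟨h1, h2, h3, _⟩ := (match_lemma G htri hquad hab hc ((memA x).mp hx).1
        ((memA x).mp hx).2.1 ((memA x).mp hx).2.2).choose_spec
      exact (memB _).mpr ⟨h1, h2, h3⟩
    · intro x hx x' hx' heq
      obtain ⟨h1, h2, h3, h4, _⟩ := (match_lemma G htri hquad hab hc ((memA x).mp hx).1
        ((memA x).mp hx).2.1 ((memA x).mp hx).2.2).choose_spec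
      obtain ⟨h1', h2', h3', h4', _⟩ := (match_lemma G htri hquad hab hc ((memA x').mp hx').1
        ((memA x').mp hx').2.1 ((memA x').mp hx').2.2).choose_spec
      set y := (match_lemma G htri hquad hab hc ((memA x).mp hx).1
        ((memA x).mp hx).2.1 ((memA x).mp hx).2.2).choose
      beta_reduce at heq
      rw [← heq] at h1' h2' h3' h4'
      -- y ∈ B-side; apply the matching lemma from b's side to y
      obtain ⟨z, _, _, _, _, huniq⟩ :=
        match_lemma G htri hquad hab.symm hc' h1 h2 h3
      have ex := huniq x ((memA x).mp hx).1 ((memA x).mp hx).2.1 h4.symm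
      have ex' := huniq x' ((memA x').mp hx').1 ((memA x').mp hx').2.1 h4'.symm
      exact ex.trans ex'.symm
    · intro y hy
      obtain ⟨hy1, hy2, hy3⟩ := (memB y).mp hy
      obtain ⟨x, hx1, hx2, hx3, hx4, _⟩ :=
        match_lemma G htri hquad hab.symm hc' hy1 hy2 hy3
      have hxA : x ∈ A := (memA x).mpr ⟨hx1, hx2, hx3⟩
      refine ⟨x, hxA, ?_⟩
      obtain ⟨h1, h2, h3, h4, huniq⟩ := (match_lemma G htri hquad hab hc ((memA x).mp hxA).1
        ((memA x).mp hxA).2.1 ((memA x).mp hxA).2.2).choose_spec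
      exact (huniq y hy1 hy2 hx4.symm).symm
  -- now translate to degrees
  have hbmem : b ∈ G.neighborFinset a := (mem_neighborFinset _ _ _).mpr hab
  have hamem : a ∈ G.neighborFinset b := (mem_neighborFinset _ _ _).mpr hab.symm
  have hcb : c ≠ b := fun h => G.irrefl (h ▸ hbc)
  have hca : c ≠ a := fun h => G.irrefl (h ▸ hac)
  have hcmemA : c ∈ (G.neighborFinset a).erase b :=
    Finset.mem_erase.mpr ⟨hcb, (mem_neighborFinset _ _ _).mpr hac⟩
  have hcmemB : c ∈ (G.neighborFinset b).erase a :=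
    Finset.mem_erase.mpr ⟨hca, (mem_neighborFinset _ _ _).mpr hbc⟩
  have e1 : A.card + 1 = ((G.neighborFinset a).erase b).card :=
    Finset.card_erase_add_one hcmemA
  have e2 : ((G.neighborFinset a).erase b).card + 1 = G.degree a :=
    Finset.card_erase_add_one hbmem
  have e3 : B.card + 1 = ((G.neighborFinset b).erase a).card :=
    Finset.card_erase_add_one hcmemB
  have e4 : ((G.neighborFinset b).erase a).card + 1 = G.degree b :=
    Finset.card_erase_add_one hamem
  omega

theorem stmt_0 {V : Type*} [Fintype V] [DecidableEq V] (G : SimpleGraph V)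
    [DecidableRel G.Adj]
    (hn : 2 ≤ Fintype.card V)
    (htri : ∀ a b : V, G.Adj a b → (G.commonNeighbors a b).ncard = 1)
    (hquad : ∀ a b : V, a ≠ b → ¬ G.Adj a b → (G.commonNeighbors a b).ncard = 2) :
    ∀ v w : V, G.degree v = G.degree w := by
  intro v w
  by_cases hvw : v = w
  · rw [hvw]
  · by_cases hadj : G.Adj v w
    · exact adj_deg G htri hquad hadj
    · obtain ⟨u, u', huu', hset⟩ := Set.ncard_eq_two.mp (hquad v w hvw hadj)
      have hu : u ∈ G.commonNeighbors v w := by rw [hset]; left; rfl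
      exact (adj_deg G htri hquad hu.1).trans (adj_deg G htri hquad hu.2.symm)
end

section
/- Let G be a strongly regular graph with parameters (n, k, 1, 2). Then the number of induced 4-cycles (quadrilaterals) in G is exactly n*k*(k-2)/8. -/
/-- The number of `m`-element vertex subsets of `G` inducing a cycle of length `m`. -/
noncomputable def inducedCycleCount {V : Type*} [Fintype V] (G : SimpleGraph V) (m : ℕ) : ℕ :=
  Set.ncard {s : Finset V | s.card = m ∧
    Nonempty (G.induce (↑s : Set V) ≃g SimpleGraph.cycleGraph m)}

/-!
Two distinct non-adjacent vertices `u, v` have exactly two common neighbours `x, y`, and `x, y`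
are non-adjacent since adjacent vertices have only one common neighbour; so `u x v y` is an
induced quadrilateral. Conversely, a quadrilateral arises in this way exactly from its four
ordered diagonal pairs, i.e. from the darts of `Gᶜ` inside it. Hence four times the number of
quadrilaterals is `n (n - k - 1)`, and the parameter identity `k (k - 2) = 2 (n - k - 1)` finishes.
-/

open Finset

namespace SimpleGraph

variable {V W : Type*} {G : SimpleGraph V} {H : SimpleGraph W}

theorem cycleGraph_four_adj_of_not_adj :
    ∀ a b c : Fin 4, a ≠ b → ¬(cycleGraph 4).Adj a b → c ≠ a → c ≠ b → (cycleGraph 4).Adj c a := by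
  decide

theorem card_dart_compl_cycleGraph_four : Fintype.card (cycleGraph 4)ᶜ.Dart = 4 := by
  decide

theorem Embedding.card_dart_filter_mem [Fintype V] [DecidableEq V] [DecidableRel G.Adj]
    [Fintype W] [DecidableRel H.Adj] (φ : H ↪g G) {s : Finset V} (hs : Set.range φ = s) :
    #{d : G.Dart | d.fst ∈ s ∧ d.snd ∈ s} = Fintype.card H.Dart := by
  have mem_s : ∀ v, v ∈ s ↔ v ∈ Set.range φ := by simp [hs]
  symm
  apply Finset.card_bij (fun d _ ↦ φ.toHom.mapDart d)
  · intro d _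
    simp [mem_s]
  · intro d _ d' _ hdd'
    simp only [Hom.mapDart_apply, Dart.mk.injEq, Prod.map, Prod.mk.injEq] at hdd'
    exact Dart.ext _ _ (Prod.ext (φ.injective hdd'.1) (φ.injective hdd'.2))
  · intro d hd
    simp only [mem_filter, mem_univ, true_and, mem_s] at hd
    obtain ⟨⟨a, ha⟩, ⟨b, hb⟩⟩ := hd
    refine ⟨⟨(a, b), ?_⟩, mem_univ _, ?_⟩
    · rw [← φ.map_adj_iff, ha, hb]; exact d.adj
    · ext <;> simp [ha, hb]

def IsQuadrilateral (G : SimpleGraph V) (s : Finset V) : Prop :=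
  s.card = 4 ∧ Nonempty (G.induce (s : Set V) ≃g cycleGraph 4)

theorem inducedCycleCount_four [Fintype V] :
    inducedCycleCount G 4 = {s : Finset V | G.IsQuadrilateral s}.ncard :=
  rfl

theorem isQuadrilateral_iff {s : Finset V} :
    G.IsQuadrilateral s ↔ ∃ φ : cycleGraph 4 ↪g G, Set.range φ = s := by
  constructor
  · rintro ⟨-, ⟨e⟩⟩
    refine ⟨(Embedding.induce _).comp e.symm.toEmbedding, ?_⟩
    show Set.range (Subtype.val ∘ e.symm) = s
    rw [Set.range_comp, e.symm.surjective.range_eq, Set.image_univ, Subtype.range_coe]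
  · rintro ⟨φ, hφ⟩
    have hs : s = univ.map φ.toEmbedding := by
      rw [← Finset.coe_inj, coe_map, coe_univ, Set.image_univ, ← hφ]; rfl
    refine ⟨by simp [hs], ⟨?_⟩⟩
    exact (hφ ▸ φ.isoInduceRange).symm

theorem IsQuadrilateral.adj_of_not_adj {s : Finset V} (hs : G.IsQuadrilateral s) {u v w : V}
    (hu : u ∈ s) (hv : v ∈ s) (hw : w ∈ s) (huv : u ≠ v) (hnadj : ¬G.Adj u v) (hwu : w ≠ u)
    (hwv : w ≠ v) : G.Adj w u := by
  obtain ⟨φ, hφ⟩ := isQuadrilateral_iff.mp hs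
  obtain ⟨a, rfl⟩ : u ∈ Set.range φ := hφ ▸ hu
  obtain ⟨b, rfl⟩ : v ∈ Set.range φ := hφ ▸ hv
  obtain ⟨c, rfl⟩ : w ∈ Set.range φ := hφ ▸ hw
  rw [φ.map_adj_iff] at hnadj ⊢
  exact cycleGraph_four_adj_of_not_adj a b c (ne_of_apply_ne φ huv) hnadj
    (ne_of_apply_ne φ hwu) (ne_of_apply_ne φ hwv)

theorem isQuadrilateral_of_adj [DecidableEq V] {a b c d : V} (hab : G.Adj a b) (hbc : G.Adj b c)
    (hcd : G.Adj c d) (hda : G.Adj d a) (hac : ¬G.Adj a c) (hbd : ¬G.Adj b d) (hne_ac : a ≠ c)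
    (hne_bd : b ≠ d) : G.IsQuadrilateral {a, b, c, d} := by
  have hinj : Function.Injective ![a, b, c, d] := by
    intro i j hij
    fin_cases i <;> fin_cases j <;> simp_all [G.ne_of_adj, Ne.symm]
  refine isQuadrilateral_iff.mpr ⟨⟨⟨![a, b, c, d], hinj⟩, @fun i j ↦ ?_⟩, ?_⟩
  · fin_cases i <;> fin_cases j <;> simp_all [adj_comm] <;> decide
  · ext; simp [eq_comm]; tauto

section StronglyRegular

variable [Fintype V] [DecidableRel G.Adj] {n k ℓ μ : ℕ}

theorem IsSRGWith.not_adj_of_mem_commonNeighbors (h : G.IsSRGWith n k 1 μ) {x y u v : V}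
    (hu : u ∈ G.commonNeighbors x y) (hv : v ∈ G.commonNeighbors x y) (huv : u ≠ v) :
    ¬G.Adj x y := fun hxy ↦
  huv <| congrArg Subtype.val <| Fintype.card_le_one_iff.mp (h.of_adj x y hxy).le ⟨u, hu⟩ ⟨v, hv⟩

variable [DecidableEq V]

theorem IsSRGWith.isQuadrilateral_union_commonNeighbors (h : G.IsSRGWith n k 1 2) {u v : V}
    (huv : u ≠ v) (hnadj : ¬G.Adj u v) :
    G.IsQuadrilateral ({u, v} ∪ (G.commonNeighbors u v).toFinset) := by
  have hcard : #(G.commonNeighbors u v).toFinset = 2 := by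
    rw [Set.toFinset_card]; exact h.of_not_adj huv hnadj
  obtain ⟨x, y, hxy, hcn⟩ := card_eq_two.mp hcard
  have hx : x ∈ G.commonNeighbors u v := by simp [← Set.mem_toFinset, hcn]
  have hy : y ∈ G.commonNeighbors u v := by simp [← Set.mem_toFinset, hcn]
  have hs : {u, v} ∪ (G.commonNeighbors u v).toFinset = {u, x, v, y} := by
    rw [hcn]; ext; simp; tauto
  have hu : u ∈ G.commonNeighbors x y := ⟨hx.1.symm, hy.1.symm⟩
  have hv : v ∈ G.commonNeighbors x y := ⟨hx.2.symm, hy.2.symm⟩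
  rw [hs]
  exact isQuadrilateral_of_adj hx.1 hx.2.symm hy.2 hy.1.symm hnadj
    (h.not_adj_of_mem_commonNeighbors hu hv huv) huv hxy

theorem IsSRGWith.union_commonNeighbors_eq (h : G.IsSRGWith n k ℓ 2) {s : Finset V}
    (hs : G.IsQuadrilateral s) {u v : V} (hu : u ∈ s) (hv : v ∈ s) (huv : u ≠ v)
    (hnadj : ¬G.Adj u v) : {u, v} ∪ (G.commonNeighbors u v).toFinset = s := by
  have hsub : s \ {u, v} ⊆ (G.commonNeighbors u v).toFinset := by
    intro w hw
    simp only [mem_sdiff, mem_insert, mem_singleton, not_or] at hw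
    obtain ⟨hw, hwu, hwv⟩ := hw
    rw [Set.mem_toFinset]
    exact ⟨(hs.adj_of_not_adj hu hv hw huv hnadj hwu hwv).symm,
      (hs.adj_of_not_adj hv hu hw huv.symm (hnadj ∘ G.adj_symm) hwv hwu).symm⟩
  have hsdiff : s \ {u, v} = (G.commonNeighbors u v).toFinset := by
    refine eq_of_subset_of_card_le hsub ?_
    rw [card_sdiff_of_subset (by simp [insert_subset_iff, hu, hv]), hs.1, card_pair huv,
      Set.toFinset_card, h.of_not_adj huv hnadj]
  rw [← hsdiff, union_sdiff_of_subset (by simp [insert_subset_iff, hu, hv])]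

theorem IsSRGWith.card_dart_compl (h : G.IsSRGWith n k ℓ μ) :
    Fintype.card Gᶜ.Dart = n * (n - k - 1) := by
  simp [dart_card_eq_sum_degrees, h.compl.regular.degree_eq, h.card]

theorem IsSRGWith.four_mul_ncard_isQuadrilateral (h : G.IsSRGWith n k 1 2) :
    4 * {s : Finset V | G.IsQuadrilateral s}.ncard = Fintype.card Gᶜ.Dart := by
  have hfin : {s : Finset V | G.IsQuadrilateral s}.Finite := Set.toFinite _
  rw [Set.ncard_eq_toFinset_card _ hfin, ← card_univ,
    card_eq_sum_card_fiberwise (t := hfin.toFinset)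
      (f := fun d : Gᶜ.Dart ↦ {d.fst, d.snd} ∪ (G.commonNeighbors d.fst d.snd).toFinset) ?maps,
    sum_const_nat (m := 4) ?fibers, mul_comm]
  case maps =>
    intro d _
    obtain ⟨hne, hnadj⟩ := (G.compl_adj _ _).mp d.adj
    simpa using h.isQuadrilateral_union_commonNeighbors hne hnadj
  case fibers =>
    intro s hs
    rw [Set.Finite.mem_toFinset] at hs
    obtain ⟨φ, hφ⟩ := isQuadrilateral_iff.mp hs
    rw [← card_dart_compl_cycleGraph_four, ← (Embedding.complEquiv φ).card_dart_filter_mem hφ]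
    congr 1
    ext d
    obtain ⟨hne, hnadj⟩ := (G.compl_adj _ _).mp d.adj
    simp only [mem_filter, mem_univ, true_and]
    constructor
    · rintro rfl
      simp
    · rintro ⟨hu, hv⟩
      exact h.union_commonNeighbors_eq hs hu hv hne hnadj

end StronglyRegular

end SimpleGraph

theorem stmt_5 {V : Type*} [Fintype V] (G : SimpleGraph V) [DecidableRel G.Adj]
    {n k : ℕ} (h : G.IsSRGWith n k 1 2) :
    8 * inducedCycleCount G 4 = n * k * (k - 2) := by
  classical
  have hquad : 4 * inducedCycleCount G 4 = n * (n - k - 1) := by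
    rw [SimpleGraph.inducedCycleCount_four, h.four_mul_ncard_isQuadrilateral, h.card_dart_compl]
  rcases Nat.eq_zero_or_pos n with rfl | hn
  · omega
  · rw [mul_assoc, show k - 2 = k - 1 - 1 by omega, SimpleGraph.IsSRGWith.param_eq G h hn]
    linarith
end

section
/- Let G be a graph in which every edge lies in a unique triangle and every non-edge has exactly two common neighbors, and suppose G is k-regular. Then the number of edges between the neighborhood N(a) of any vertex a and the set W(a) of vertices at distance 2 from a equals k*(k-2), and also equals 2*(n-k-1), where n is the number of vertices. -/
/-!
The vertices at distance two from `a` are exactly the neighbours of `a` in the complement graph,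
so the statement counts the edges between `N(a)` and `Gᶜ.N(a)`, and it holds in any strongly regular
graph with parameters `(n, k, λ, μ)`. Counting from the `N(a)` side, a neighbour `b` of `a` has
`k` neighbours, of which `a` itself and the `λ` common neighbours of `a` and `b` lie outside
`W(a)`, giving `k (k - λ - 1)`. Counting from the `W(a)` side, each of the `n - k - 1` vertices
of `W(a)` has exactly `μ` neighbours in `N(a)`. Here `λ = 1` and `μ = 2`.
-/

open Finset

namespace SimpleGraph

variable {V : Type*} [Fintype V] [DecidableEq V] {G : SimpleGraph V} [DecidableRel G.Adj]

theorem card_commonNeighbors_eq_card_inter (v w : V) :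
    Fintype.card (G.commonNeighbors v w) = #(G.neighborFinset v ∩ G.neighborFinset w) := by
  rw [← Set.toFinset_card]
  congr 1
  ext u
  simp only [Set.mem_toFinset, mem_inter, mem_neighborFinset, mem_commonNeighbors]

theorem card_interedges_eq_sum_left (s t : Finset V) :
    #(G.interedges s t) = ∑ v ∈ s, #(G.neighborFinset v ∩ t) := by
  simp_rw [interedges_def, card_filter, sum_product, ← card_filter, neighborFinset_eq_filter,
    filter_inter, univ_inter]

theorem card_interedges_eq_sum_right (s t : Finset V) :
    #(G.interedges s t) = ∑ w ∈ t, #(s ∩ G.neighborFinset w) := by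
  simp_rw [interedges_def, card_filter, sum_product_right, ← card_filter, neighborFinset_eq_filter,
    inter_filter, inter_univ, adj_comm]

variable {n k ℓ μ : ℕ}

theorem IsSRGWith.card_neighborFinset_inter_compl_neighborFinset (h : G.IsSRGWith n k ℓ μ)
    {v w : V} (hvw : G.Adj v w) :
    #(G.neighborFinset w ∩ Gᶜ.neighborFinset v) = k - ℓ - 1 := by
  have hv : {v} ⊆ G.neighborFinset w \ G.neighborFinset v := by simpa using hvw.symm
  rw [neighborFinset_compl, ← inter_sdiff_assoc, ← sdiff_eq_inter_compl, card_sdiff_of_subset hv,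
    card_sdiff, card_neighborFinset_eq_degree, h.regular w, ← card_commonNeighbors_eq_card_inter,
    h.of_adj v w hvw, card_singleton]

theorem IsSRGWith.card_interedges_neighborFinset_compl_eq_left (h : G.IsSRGWith n k ℓ μ) (v : V) :
    #(G.interedges (G.neighborFinset v) (Gᶜ.neighborFinset v)) = k * (k - ℓ - 1) := by
  rw [card_interedges_eq_sum_left, sum_const_nat fun w hw =>
    h.card_neighborFinset_inter_compl_neighborFinset ((G.mem_neighborFinset v w).1 hw),
    card_neighborFinset_eq_degree, h.regular v]

theorem IsSRGWith.card_interedges_neighborFinset_compl_eq_right (h : G.IsSRGWith n k ℓ μ)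
    (v : V) : #(G.interedges (G.neighborFinset v) (Gᶜ.neighborFinset v)) = (n - k - 1) * μ := by
  have hμ : ∀ w ∈ Gᶜ.neighborFinset v, #(G.neighborFinset v ∩ G.neighborFinset w) = μ := by
    intro w hw
    rw [mem_neighborFinset, compl_adj] at hw
    rw [← card_commonNeighbors_eq_card_inter, h.of_not_adj hw.1 hw.2]
  rw [card_interedges_eq_sum_right, sum_const_nat hμ, card_neighborFinset_eq_degree,
    h.compl.regular v]

end SimpleGraph

theorem stmt_7 {V : Type*} [Fintype V] [DecidableEq V] (G : SimpleGraph V)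
    [DecidableRel G.Adj] {n k : ℕ}
    (hn : Fintype.card V = n)
    (hreg : G.IsRegularOfDegree k)
    (htri : ∀ a b : V, G.Adj a b → (G.commonNeighbors a b).ncard = 1)
    (hquad : ∀ a b : V, a ≠ b → ¬ G.Adj a b → (G.commonNeighbors a b).ncard = 2)
    (a : V) :
    (Finset.univ.filter (fun p : V × V =>
        p.1 ∈ G.neighborFinset a ∧
        p.2 ∉ G.neighborFinset a ∧ p.2 ≠ a ∧
        G.Adj p.1 p.2)).card = k * (k - 2) ∧
    (Finset.univ.filter (fun p : V × V =>
        p.1 ∈ G.neighborFinset a ∧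
        p.2 ∉ G.neighborFinset a ∧ p.2 ≠ a ∧
        G.Adj p.1 p.2)).card = 2 * (n - k - 1) := by
  have hsrg : G.IsSRGWith n k 1 2 :=
    { card := hn
      regular := hreg
      of_adj := fun v w hvw => by
        rw [← Nat.card_eq_fintype_card, Nat.card_coe_set_eq, htri v w hvw]
      of_not_adj := fun v w hne hvw => by
        rw [← Nat.card_eq_fintype_card, Nat.card_coe_set_eq, hquad v w hne hvw] }
  have hW : Finset.univ.filter (fun p : V × V => p.1 ∈ G.neighborFinset a ∧
      p.2 ∉ G.neighborFinset a ∧ p.2 ≠ a ∧ G.Adj p.1 p.2) =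
      G.interedges (G.neighborFinset a) (Gᶜ.neighborFinset a) := by
    ext ⟨b, w⟩
    simp [SimpleGraph.mem_interedges_iff, SimpleGraph.neighborFinset_compl, and_assoc]
  rw [hW]
  exact ⟨hsrg.card_interedges_neighborFinset_compl_eq_left a,
    by rw [hsrg.card_interedges_neighborFinset_compl_eq_right, mul_comm]⟩
end

section
/- Let G be a strongly regular graph with parameters (n, k, 1, 2). Then the number of induced 5-cycles (pentagons) in G is exactly n*k*(k-2)*(k-4)/5. -/
/-!
Count ordered induced pentagons `(a, b, c, d, e)`, i.e. induced embeddings of `C₅`; each pentagon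
carries `|Aut C₅| = 10` of them. An induced path `a b c d` (there are `n k (k - 2) (k - 3)`) closes
through each of the two common neighbours `e` of `a` and `d`, and `e` fails to give an induced
pentagon exactly when it is adjacent to `b` or to `c` (never both, as `λ = 1`). For an induced path
`a b c` the chord `e ~ b` forces `e` to be the unique common neighbour of `a` and `b`, and then
leaves one choice of `d`; by reversal the same holds for `e ~ c`. Hence
`10 P + 2 n k (k - 2) = 2 n k (k - 2) (k - 3)`.
-/

open Finset

theorem Fintype.sum_reverse_four {α M : Type*} [AddCommMonoid M] [Fintype α]
    (f : α → α → α → α → M) :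
    ∑ a, ∑ b, ∑ c, ∑ d, f d c b a = ∑ a, ∑ b, ∑ c, ∑ d, f a b c d := by
  simp only [← Fintype.sum_prod_type']
  exact Fintype.sum_equiv ⟨fun x => (x.2.2.2, x.2.2.1, x.2.1, x.1),
    fun x => (x.2.2.2, x.2.2.1, x.2.1, x.1), fun _ => rfl, fun _ => rfl⟩ _ _ fun _ => rfl

namespace SimpleGraph

variable {V W : Type*} {G : SimpleGraph V} {H : SimpleGraph W}

instance [Finite V] [Finite W] : Finite (H ≃g G) :=
  .of_injective _ DFunLike.coe_injective

noncomputable def Iso.equivEmbeddingOfFinite [Finite W] : (H ≃g H) ≃ (H ↪g H) where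
  toFun e := e.toEmbedding
  invFun f := RelIso.ofSurjective f (Finite.injective_iff_surjective.mp f.injective)
  left_inv _ := by ext; rfl
  right_inv _ := rfl

theorem range_induce_comp_iso (s : Set V) (e : H ≃g G.induce s) :
    Set.range ((Embedding.induce s).comp e.toEmbedding) = s := by
  ext v
  refine ⟨?_, fun hv => ⟨e.symm ⟨v, hv⟩, by simp⟩⟩
  rintro ⟨w, rfl⟩
  exact (e w).2

theorem Embedding.bijective_induce_comp_iso [Fintype V] :
    Function.Bijective fun p : Σ s : Finset V, H ≃g G.induce (s : Set V) =>
      (Embedding.induce (p.1 : Set V)).comp p.2.toEmbedding := by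
  classical
  constructor
  · rintro ⟨s, e⟩ ⟨t, e'⟩ hee'
    obtain rfl : s = t := by
      have hst : ((Embedding.induce (s : Set V)).comp e.toEmbedding : W → V) =
          (Embedding.induce (t : Set V)).comp e'.toEmbedding := congrArg DFunLike.coe hee'
      have := range_induce_comp_iso (s : Set V) e
      rwa [hst, range_induce_comp_iso, eq_comm, Finset.coe_inj] at this
    congr
    ext w
    exact congrArg (fun f : H ↪g G => f w) hee'
  · intro f
    have hmem : ∀ v, v ∈ (univ.filter (· ∈ Set.range f)) ↔ ∃ w, f w = v := by simp
    refine ⟨⟨univ.filter (· ∈ Set.range f), RelIso.mk (Equiv.ofBijective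
      (fun w => ⟨f w, (hmem _).2 ⟨w, rfl⟩⟩) ⟨fun w w' h => f.injective (congrArg Subtype.val h),
        fun v => ?_⟩) f.map_adj_iff⟩, rfl⟩
    obtain ⟨w, hw⟩ := (hmem _).1 v.2
    exact ⟨w, Subtype.ext hw⟩

theorem card_embedding_eq_card_iso_mul [Fintype V] [Finite W] :
    Nat.card (H ↪g G) =
      Nat.card (H ≃g H) * Set.ncard {s : Finset V | Nonempty (G.induce (s : Set V) ≃g H)} := by
  classical
  have hfiber (s : Finset V) : Nat.card (H ≃g G.induce (s : Set V)) =
      if Nonempty (G.induce (s : Set V) ≃g H) then Nat.card (H ≃g H) else 0 := by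
    split_ifs with hs
    · exact Nat.card_congr (RelIso.relIsoCongr (RelIso.refl _) hs.some)
    · have : IsEmpty (H ≃g G.induce (s : Set V)) := ⟨fun e => hs ⟨e.symm⟩⟩
      exact Nat.card_of_isEmpty
  rw [← Nat.card_eq_of_bijective _ Embedding.bijective_induce_comp_iso, Nat.card_sigma,
    ← Finset.coe_filter_univ, Set.ncard_coe_finset, Finset.sum_congr rfl fun s _ => hfiber s,
    Finset.sum_ite, Finset.sum_const_zero, Finset.sum_const, smul_eq_mul, add_zero, mul_comm]

theorem injective_of_adj_iff {f : W → V} (hH : ∀ i j, (∀ l, H.Adj l i ↔ H.Adj l j) → i = j)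
    (hf : ∀ i j, G.Adj (f i) (f j) ↔ H.Adj i j) : Function.Injective f :=
  fun i j hij => hH i j fun l => by rw [← hf, ← hf, hij]

theorem cycleGraph_five_eq_of_forall_adj_iff :
    ∀ i j : Fin 5, (∀ l, (cycleGraph 5).Adj l i ↔ (cycleGraph 5).Adj l j) → i = j := by
  decide

variable (G) in
def IsInducedPath3 (a b c : V) : Prop := G.Adj a b ∧ G.Adj b c ∧ a ≠ c ∧ ¬G.Adj a c

variable (G) in
def IsInducedPath4 (a b c d : V) : Prop :=
  G.IsInducedPath3 a b c ∧ G.Adj c d ∧ ¬G.Adj a d ∧ ¬G.Adj b d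

variable (G) in
def IsInducedPentagon (a b c d e : V) : Prop :=
  G.IsInducedPath4 a b c d ∧ G.Adj d e ∧ G.Adj e a ∧ ¬G.Adj b e ∧ ¬G.Adj c e

section Decidable
variable [DecidableEq V] [DecidableRel G.Adj] {a b c d e : V}

instance : Decidable (G.IsInducedPath3 a b c) := inferInstanceAs (Decidable (_ ∧ _))
instance : Decidable (G.IsInducedPath4 a b c d) := inferInstanceAs (Decidable (_ ∧ _))
instance : Decidable (G.IsInducedPentagon a b c d e) := inferInstanceAs (Decidable (_ ∧ _))

end Decidable

theorem IsInducedPath4.reverse {a b c d : V} (h : G.IsInducedPath4 a b c d) :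
    G.IsInducedPath4 d c b a := by
  obtain ⟨⟨hab, hbc, -, hac⟩, hcd, had, hbd⟩ := h
  exact ⟨⟨hcd.symm, hbc.symm, fun hdb => had (hdb ▸ hab), mt G.adj_symm hbd⟩, hab.symm,
    mt G.adj_symm had, mt G.adj_symm hac⟩

theorem isInducedPentagon_iff_forall_adj_iff {v : Fin 5 → V} :
    G.IsInducedPentagon (v 0) (v 1) (v 2) (v 3) (v 4) ↔
      ∀ i j, G.Adj (v i) (v j) ↔ (cycleGraph 5).Adj i j := by
  constructor
  · rintro ⟨⟨⟨h01, h12, -, h02⟩, h23, h03, h13⟩, h34, h40, h14, h24⟩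
    intro i j
    fin_cases i <;> fin_cases j <;>
      simp [cycleGraph_adj, h01, h12, h23, h34, h40, h01.symm, h12.symm, h23.symm, h34.symm,
        h40.symm, h02, h03, h13, h14, h24, mt G.adj_symm h02, mt G.adj_symm h03,
        mt G.adj_symm h13, mt G.adj_symm h14, mt G.adj_symm h24] <;> decide
  · intro h
    have hv := injective_of_adj_iff cycleGraph_five_eq_of_forall_adj_iff h
    exact ⟨⟨⟨(h 0 1).2 (by decide), (h 1 2).2 (by decide), hv.ne (by decide),
      (h 0 2).not.2 (by decide)⟩, (h 2 3).2 (by decide), (h 0 3).not.2 (by decide),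
      (h 1 3).not.2 (by decide)⟩, (h 3 4).2 (by decide), (h 4 0).2 (by decide),
      (h 1 4).not.2 (by decide), (h 2 4).not.2 (by decide)⟩

def cycleGraphFiveEmbeddingEquiv : (cycleGraph 5 ↪g G) ≃
    {t : V × V × V × V × V // G.IsInducedPentagon t.1 t.2.1 t.2.2.1 t.2.2.2.1 t.2.2.2.2} where
  toFun f := ⟨(f 0, f 1, f 2, f 3, f 4),
    isInducedPentagon_iff_forall_adj_iff.2 fun _ _ => f.map_adj_iff⟩
  invFun t :=
    have h := isInducedPentagon_iff_forall_adj_iff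
      (v := ![t.1.1, t.1.2.1, t.1.2.2.1, t.1.2.2.2.1, t.1.2.2.2.2]) |>.1 t.2
    { toFun := ![t.1.1, t.1.2.1, t.1.2.2.1, t.1.2.2.2.1, t.1.2.2.2.2]
      inj' := injective_of_adj_iff cycleGraph_five_eq_of_forall_adj_iff h
      map_rel_iff' := h _ _ }
  left_inv f := by ext i; fin_cases i <;> rfl
  right_inv t := rfl

theorem card_cycleGraph_five_embedding [Fintype V] [DecidableEq V] [DecidableRel G.Adj] :
    Nat.card (cycleGraph 5 ↪g G) = ∑ a, ∑ b, ∑ c, ∑ d, #{e | G.IsInducedPentagon a b c d e} := by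
  rw [Nat.card_congr cycleGraphFiveEmbeddingEquiv, Nat.card_eq_fintype_card, Fintype.card_subtype]
  simp only [card_filter, Fintype.sum_prod_type]

theorem card_cycleGraph_five_iso : Nat.card (cycleGraph 5 ≃g cycleGraph 5) = 10 := by
  rw [Nat.card_congr Iso.equivEmbeddingOfFinite, card_cycleGraph_five_embedding]
  decide

theorem card_commonNeighbors_eq_card_filter [Fintype V] [DecidableRel G.Adj] (v w : V) :
    Fintype.card (G.commonNeighbors v w) = #{x | G.Adj v x ∧ G.Adj w x} := by
  rw [← Fintype.card_subtype]
  exact Fintype.card_congr (Equiv.subtypeEquivRight fun _ => Iff.rfl)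

namespace IsSRGWith

variable [Fintype V] [DecidableRel G.Adj] {n k ℓ μ : ℕ} {v w : V}

theorem card_filter_adj (h : G.IsSRGWith n k ℓ μ) (v : V) : #{w | G.Adj v w} = k := by
  rw [← neighborFinset_eq_filter, card_neighborFinset_eq_degree, h.regular.degree_eq]

theorem card_filter_adj_adj_of_adj (h : G.IsSRGWith n k ℓ μ) (hvw : G.Adj v w) :
    #{x | G.Adj v x ∧ G.Adj w x} = ℓ := by
  rw [← h.of_adj v w hvw, card_commonNeighbors_eq_card_filter]

theorem card_filter_adj_adj_of_not_adj (h : G.IsSRGWith n k ℓ μ) (hne : v ≠ w)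
    (hvw : ¬G.Adj v w) : #{x | G.Adj v x ∧ G.Adj w x} = μ := by
  rw [← h.of_not_adj hne hvw, card_commonNeighbors_eq_card_filter]

theorem commonNeighbor_unique {x y : V} (h : G.IsSRGWith n k 1 μ) (hvw : G.Adj v w)
    (hx : G.Adj v x ∧ G.Adj w x) (hy : G.Adj v y ∧ G.Adj w y) : x = y :=
  card_le_one.1 (h.card_filter_adj_adj_of_adj hvw).le x (by simpa) y (by simpa)

theorem card_filter_adj_and_not (h : G.IsSRGWith n k ℓ μ) (v : V) (p : V → Prop)
    [DecidablePred p] : #{x | G.Adj v x ∧ ¬p x} = k - #{x | G.Adj v x ∧ p x} := by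
  have := card_filter_add_card_filter_not (s := ({x | G.Adj v x} : Finset V)) p
  rw [h.card_filter_adj, filter_filter, filter_filter] at this
  omega

variable [DecidableEq V]

theorem card_isInducedPath3 (h : G.IsSRGWith n k ℓ μ) (a b : V) :
    #{c | G.IsInducedPath3 a b c} = if G.Adj a b then k - ℓ - 1 else 0 := by
  split_ifs with hab
  · have hcommon : #{c | G.Adj b c ∧ (c = a ∨ G.Adj a c)} = ℓ + 1 := by
      rw [← h.card_filter_adj_adj_of_adj hab, ← card_insert_of_notMem (a := a) (by simp)]
      congr 1
      ext c
      simp only [mem_filter, mem_univ, true_and, mem_insert]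
      constructor
      · rintro ⟨hbc, rfl | hac⟩
        exacts [.inl rfl, .inr ⟨hac, hbc⟩]
      · rintro (rfl | ⟨hac, hbc⟩)
        exacts [⟨hab.symm, .inl rfl⟩, ⟨hbc, .inr hac⟩]
    rw [Nat.sub_sub, ← hcommon, ← h.card_filter_adj_and_not]
    congr 1
    ext c
    simp only [IsInducedPath3, mem_filter, mem_univ, true_and, not_or, hab]
    tauto
  · exact card_eq_zero.2 (filter_eq_empty_iff.2 fun c _ hc => hab hc.1)

theorem card_isInducedPath4 (h : G.IsSRGWith n k 1 μ) (a b c : V) :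
    #{d | G.IsInducedPath4 a b c d} = if G.IsInducedPath3 a b c then k - μ - 1 else 0 := by
  split_ifs with habc
  · obtain ⟨hab, hbc, hne, hac⟩ := habc
    have hcommon : #{d | G.Adj c d ∧ (G.Adj a d ∨ G.Adj b d)} = μ + 1 := by
      rw [← h.card_filter_adj_adj_of_not_adj hne hac, ← h.card_filter_adj_adj_of_adj hbc,
        ← card_union_of_disjoint]
      · congr 1
        ext d
        simp only [mem_filter, mem_univ, true_and, mem_union]
        tauto
      · refine disjoint_filter.2 fun x _ hax hbx =>
          hne (h.commonNeighbor_unique hbx.1 ⟨hab.symm, hax.1.symm⟩ ⟨hbc, hax.2.symm⟩)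
    rw [Nat.sub_sub, ← hcommon, ← h.card_filter_adj_and_not]
    congr 1
    ext d
    simp only [mem_filter, mem_univ, true_and, not_or]
    simp only [IsInducedPath4, IsInducedPath3]
    tauto
  · exact card_eq_zero.2 (filter_eq_empty_iff.2 fun d _ hd => habc hd.1)

theorem sum_card_isInducedPath3 (h : G.IsSRGWith n k ℓ μ) :
    ∑ a, ∑ b, #{c | G.IsInducedPath3 a b c} = n * k * (k - ℓ - 1) := by
  simp only [h.card_isInducedPath3, sum_ite, sum_const, smul_eq_mul, mul_zero, add_zero,
    h.card_filter_adj, card_univ, h.card]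
  ring

theorem sum_card_isInducedPath4 (h : G.IsSRGWith n k 1 μ) :
    ∑ a, ∑ b, ∑ c, #{d | G.IsInducedPath4 a b c d} = n * k * (k - 2) * (k - μ - 1) := by
  simp only [h.card_isInducedPath4, sum_ite, sum_const, smul_eq_mul, mul_zero, add_zero,
    ← sum_mul, h.sum_card_isInducedPath3, Nat.sub_sub]

theorem card_isInducedPentagon_add_card_chord (h : G.IsSRGWith n k 1 μ) (a b c d : V) :
    #{e | G.IsInducedPentagon a b c d e} +
      (#{e | G.IsInducedPath4 a b c d ∧ G.Adj d e ∧ G.Adj e a ∧ G.Adj b e} +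
        #{e | G.IsInducedPath4 a b c d ∧ G.Adj d e ∧ G.Adj e a ∧ G.Adj c e}) =
      if G.IsInducedPath4 a b c d then μ else 0 := by
  split_ifs with habcd
  · obtain ⟨⟨hab, hbc, hac', hac⟩, hcd, had, hbd⟩ := habcd
    have had' : a ≠ d := by rintro rfl; exact hac hcd.symm
    rw [← h.card_filter_adj_adj_of_not_adj had' had, ← card_union_of_disjoint,
      ← card_union_of_disjoint]
    · congr 1
      ext e
      simp only [mem_filter, mem_univ, true_and, mem_union]
      simp only [IsInducedPentagon, IsInducedPath4, IsInducedPath3, hab, hbc, hac', hac, hcd,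
        had, hbd, G.adj_comm e a, not_false_eq_true, and_self, true_and, ne_eq]
      tauto
    · refine Finset.disjoint_left.2 fun e hp hq => ?_
      simp only [mem_filter, mem_union, mem_univ, true_and] at hp hq
      rcases hq with hq | hq
      exacts [hp.2.2.2.1 hq.2.2.2, hp.2.2.2.2 hq.2.2.2]
    · exact disjoint_filter.2 fun e _ hb hc =>
        hac' (h.commonNeighbor_unique hb.2.2.2 ⟨hab.symm, hb.2.2.1⟩ ⟨hbc, hc.2.2.2.symm⟩)
  · have hempty {p : V → Prop} [DecidablePred p] (hp : ∀ e, p e → G.IsInducedPath4 a b c d) :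
        #{e | p e} = 0 := card_eq_zero.2 (filter_eq_empty_iff.2 fun e _ he => habcd (hp e he))
    rw [hempty fun _ he => he.1, hempty fun _ he => he.1, hempty fun _ he => he.1]

theorem sum_card_chord (h : G.IsSRGWith n k 1 μ) (a b c : V) :
    ∑ d, #{e | G.IsInducedPath4 a b c d ∧ G.Adj d e ∧ G.Adj e a ∧ G.Adj b e} =
      if G.IsInducedPath3 a b c then μ - 1 else 0 := by
  split_ifs with habc
  · obtain ⟨hab, hbc, hac', hac⟩ := habc
    obtain ⟨w, hw⟩ := card_eq_one.1 (h.card_filter_adj_adj_of_adj hab)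
    have hw' : G.Adj a w ∧ G.Adj b w := by
      simpa using (Finset.ext_iff.1 hw w).2 (mem_singleton_self w)
    have hcw : c ≠ w := by rintro rfl; exact hac hw'.1
    have hcw' : ¬G.Adj c w := fun hcw' =>
      hac' (h.commonNeighbor_unique hw'.2 ⟨hab.symm, hw'.1.symm⟩ ⟨hbc, hcw'.symm⟩)
    have hfiber :
        ({d | G.IsInducedPath4 a b c d ∧ G.Adj d w ∧ G.Adj w a ∧ G.Adj b w} : Finset V) =
          ({d | G.Adj c d ∧ G.Adj w d} : Finset V).erase b := by
      ext d
      simp only [mem_filter, mem_univ, true_and, mem_erase]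
      constructor
      · rintro ⟨⟨-, hcd, had, -⟩, hdw, -, -⟩
        exact ⟨by rintro rfl; exact had hab, hcd, hdw.symm⟩
      · rintro ⟨hdb, hcd, hwd⟩
        refine ⟨⟨⟨hab, hbc, hac', hac⟩, hcd, fun had => hdb ?_, fun hbd => hac ?_⟩,
          hwd.symm, hw'.1.symm, hw'.2⟩
        · exact h.commonNeighbor_unique hw'.1 ⟨had, hwd⟩ ⟨hab, hw'.2.symm⟩
        · rw [← h.commonNeighbor_unique hw'.2 ⟨hbd, hwd⟩ ⟨hab.symm, hw'.1.symm⟩]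
          exact hcd.symm
    simp only [card_filter]
    rw [sum_comm, sum_eq_single w, ← card_filter, hfiber, card_erase_of_mem,
      h.card_filter_adj_adj_of_not_adj hcw hcw']
    · simpa using ⟨hbc.symm, hw'.2.symm⟩
    · intro e _ hew
      refine sum_eq_zero fun d _ => if_neg fun hd => hew ?_
      exact h.commonNeighbor_unique hab ⟨hd.2.2.1.symm, hd.2.2.2⟩ hw'
    · simp
  · exact sum_eq_zero fun d _ => card_eq_zero.2 (filter_eq_empty_iff.2 fun e _ he => habc he.1.1)

theorem sum_card_isInducedPentagon (h : G.IsSRGWith n k 1 μ) :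
    ∑ a, ∑ b, ∑ c, ∑ d, #{e | G.IsInducedPentagon a b c d e} + 2 * (n * k * (k - 2) * (μ - 1)) =
      μ * (n * k * (k - 2) * (k - μ - 1)) := by
  have hb : ∑ a, ∑ b, ∑ c, ∑ d,
      #{e | G.IsInducedPath4 a b c d ∧ G.Adj d e ∧ G.Adj e a ∧ G.Adj b e} =
        n * k * (k - 2) * (μ - 1) := by
    simp only [h.sum_card_chord, sum_ite, sum_const, smul_eq_mul, mul_zero,
      add_zero, ← sum_mul, h.sum_card_isInducedPath3, Nat.sub_sub]
  have hc : ∑ a, ∑ b, ∑ c, ∑ d,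
      #{e | G.IsInducedPath4 a b c d ∧ G.Adj d e ∧ G.Adj e a ∧ G.Adj c e} =
        n * k * (k - 2) * (μ - 1) := by
    refine Eq.trans ?_ ((Fintype.sum_reverse_four _).trans hb)
    refine Fintype.sum_congr _ _ fun a => Fintype.sum_congr _ _ fun b =>
      Fintype.sum_congr _ _ fun c => Fintype.sum_congr _ _ fun d => ?_
    congr 1
    ext e
    simp only [mem_filter, mem_univ, true_and]
    constructor <;> rintro ⟨hp, h1, h2, h3⟩ <;> exact ⟨hp.reverse, h2.symm, h1.symm, h3⟩
  rw [two_mul]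
  nth_rw 1 [← hb]
  rw [← hc]
  simp only [← sum_add_distrib, h.card_isInducedPentagon_add_card_chord, sum_ite, sum_const,
    smul_eq_mul, mul_zero, add_zero, ← sum_mul, h.sum_card_isInducedPath4, mul_comm μ]

end IsSRGWith

theorem inducedCycleCount_eq_ncard [Fintype V] (G : SimpleGraph V) (m : ℕ) :
    inducedCycleCount G m =
      Set.ncard {s : Finset V | Nonempty (G.induce (s : Set V) ≃g cycleGraph m)} := by
  unfold inducedCycleCount
  congr 1
  ext s
  refine ⟨fun hs => hs.2, fun ⟨e⟩ => ⟨?_, ⟨e⟩⟩⟩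
  simpa using Fintype.card_congr e.toEquiv

end SimpleGraph

open SimpleGraph

theorem stmt_8 {V : Type*} [Fintype V] (G : SimpleGraph V) [DecidableRel G.Adj]
    {n k : ℕ} (h : G.IsSRGWith n k 1 2) :
    5 * inducedCycleCount G 5 = n * k * (k - 2) * (k - 4) := by
  classical
  have hcount := card_embedding_eq_card_iso_mul (G := G) (H := cycleGraph 5)
  rw [card_cycleGraph_five_iso, card_cycleGraph_five_embedding, ← inducedCycleCount_eq_ncard]
    at hcount
  have hpent := h.sum_card_isInducedPentagon
  rw [hcount] at hpent
  generalize n * k * (k - 2) = m at hpent ⊢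
  obtain hk | hk := le_or_gt 4 k
  · rw [show k - 2 - 1 = k - 4 + 1 by omega] at hpent
    linarith
  · rw [show k - 2 - 1 = 0 by omega] at hpent
    rw [show k - 4 = 0 by omega]
    omega
end

section
/- Let G be a strongly regular graph with parameters (n, k, 1, 2), and let n2 denote the number of induced subgraphs of G isomorphic to the graph obtained from a 4-cycle by erecting triangles on two adjacent sides (the 6-vertex graph consisting of a quadrilateral with two triangles completed on adjacent edges). Then n2 = n*k*(k-2)/2, i.e., n2 = 4 times the number of induced 4-cycles. -/
/-- The 6-vertex graph obtained from the 4-cycle `0-1-2-3-0` by erecting triangles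
on the two adjacent sides `01` (apex `4`) and `12` (apex `5`). -/
def squareWithTwoAdjacentTriangles : SimpleGraph (Fin 6) :=
  SimpleGraph.fromRel (fun i j =>
    (i, j) ∈ [((0 : Fin 6), (1 : Fin 6)), (1, 2), (2, 3), (3, 0), (0, 4), (1, 4), (1, 5), (2, 5)])

/-!
Count labelled induced copies, i.e. graph embeddings: for any `H`, the embeddings `H ↪g G` number
`|Aut H|` times the induced copies of `H`, and `|Aut H|` is `2` for the square with two triangles
and `8` for the square itself. Since `λ = 1`, every edge of `G` lies in exactly one triangle, so an
embedded square extends in exactly one way: the two apexes are forced, and `λ = 1, μ = 2` keep them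
non-adjacent to the rest. Hence both kinds of embeddings are equinumerous. An embedded square is
fixed by its diagonal `(ψ 0, ψ 2)`, one of the `n (n - k - 1)` ordered non-adjacent pairs, and by
`ψ 1`, one of the `μ = 2` common neighbours of that pair. The parameter identity
`k (k - λ - 1) = μ (n - k - 1)` turns `2 n (n - k - 1)` into `n k (k - 2)`.
-/

namespace SimpleGraph

variable {V W : Type*}

instance Embedding.instFinite [Finite V] [Finite W] {G : SimpleGraph V} {H : SimpleGraph W} :
    Finite (H ↪g G) :=
  DFunLike.finite _

open scoped Classical in
theorem card_iso_eq_ite {V' : Type*} (A : SimpleGraph W) (B : SimpleGraph V') :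
    Nat.card (A ≃g B) = if Nonempty (B ≃g A) then Nat.card (A ≃g A) else 0 := by
  split_ifs with h
  · exact Nat.card_congr (RelIso.relIsoCongr (RelIso.refl _) h.some)
  · have : IsEmpty (A ≃g B) := ⟨fun e => h ⟨e.symm⟩⟩
    exact Nat.card_of_isEmpty

variable {G : SimpleGraph V} {H : SimpleGraph W}

noncomputable def isoInduceEquivEmbedding [Fintype W] (s : Finset V) :
    (H ≃g G.induce (s : Set V)) ≃ {f : H ↪g G // Finset.univ.map f.toEmbedding = s} :=
  Equiv.ofBijective
    (fun e => ⟨(Embedding.induce (s : Set V)).comp e.toEmbedding, by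
      ext v
      simp only [Finset.mem_map, Finset.mem_univ, true_and]
      exact ⟨fun ⟨w, hw⟩ => hw ▸ (e w).2, fun hv => ⟨e.symm ⟨v, hv⟩, by simp⟩⟩⟩)
    ⟨fun e e' hee' => RelIso.ext fun w =>
        Subtype.ext (DFunLike.congr_fun (congrArg Subtype.val hee') w),
      fun ⟨f, hf⟩ => by
        have hrange : Set.range f = (s : Set V) := by
          rw [← hf, Finset.coe_map, Finset.coe_univ, Set.image_univ]; rfl
        exact ⟨f.isoInduceRange.trans
          { Equiv.setCongr hrange with map_rel_iff' := Iff.rfl }, rfl⟩⟩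

theorem card_embedding_eq_card_iso_mul_ncard [Fintype V] [Fintype W] :
    Nat.card (H ↪g G) = Nat.card (H ≃g H) * Set.ncard
      {s : Finset V | s.card = Fintype.card W ∧ Nonempty (G.induce (s : Set V) ≃g H)} := by
  classical
  have hset : {s : Finset V | s.card = Fintype.card W ∧ Nonempty (G.induce (s : Set V) ≃g H)} =
      ↑(Finset.univ.filter fun s : Finset V => Nonempty (G.induce (s : Set V) ≃g H)) := by
    ext s
    simp only [Set.mem_ofPred_eq, Finset.coe_filter, Finset.mem_univ, true_and,
      and_iff_right_iff_imp]
    exact fun ⟨e⟩ => by simpa using Fintype.card_congr e.toEquiv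
  rw [hset, Set.ncard_coe_finset,
    ← Nat.card_congr (Equiv.sigmaFiberEquiv fun f : H ↪g G => Finset.univ.map f.toEmbedding),
    Nat.card_sigma, Finset.sum_congr rfl fun s _ =>
      (Nat.card_congr (isoInduceEquivEmbedding s)).symm.trans (card_iso_eq_ite _ _),
    Finset.sum_ite, Finset.sum_const_zero, add_zero, Finset.sum_const, smul_eq_mul, mul_comm]

def autEquivSubtypePerm (A : SimpleGraph W) :
    (A ≃g A) ≃ {e : Equiv.Perm W // ∀ i j, A.Adj (e i) (e j) ↔ A.Adj i j} where
  toFun f := ⟨f.toEquiv, fun _ _ => f.map_rel_iff⟩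
  invFun e := ⟨e.1, e.2 _ _⟩

def Embedding.ofAdjIff (hH : Function.Injective H.neighborSet) (v : W → V)
    (hv : ∀ i j, G.Adj (v i) (v j) ↔ H.Adj i j) : H ↪g G where
  toFun := v
  inj' i j hij := hH <| Set.ext fun t => by simp only [mem_neighborSet, ← hv, hij]
  map_rel_iff' := hv _ _

def cycleGraphFourEmbedding {a b c d : V} (hab : G.Adj a b) (hbc : G.Adj b c) (hcd : G.Adj c d)
    (hda : G.Adj d a) (hac : ¬G.Adj a c) (hbd : ¬G.Adj b d) (hac' : a ≠ c) (hbd' : b ≠ d) :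
    cycleGraph 4 ↪g G where
  toFun := ![a, b, c, d]
  inj' i j hij := by
    fin_cases i <;> fin_cases j <;>
      simp_all [hab.ne, hbc.ne, hcd.ne, hda.ne, hab.ne', hbc.ne', hcd.ne', hda.ne', hac'.symm,
        hbd'.symm]
  map_rel_iff' {i j} := by
    change G.Adj (![a, b, c, d] i) (![a, b, c, d] j) ↔ _
    fin_cases i <;> fin_cases j <;>
      simp [hab, hbc, hcd, hda, hac, hbd, hab.symm, hbc.symm, hcd.symm, hda.symm,
        (mt Adj.symm hac : ¬G.Adj c a), (mt Adj.symm hbd : ¬G.Adj d b)] <;> decide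

theorem not_adj_of_commonNeighbors_eq_pair {p q r s x : V}
    (hpq : G.commonNeighbors p q = {r, s}) (hrs : ¬G.Adj r s) (hxr : G.Adj x r)
    (hpx : G.Adj p x) : ¬G.Adj q x := by
  intro hqx
  have hx : x ∈ G.commonNeighbors p q := (mem_commonNeighbors G).2 ⟨hpx, hqx⟩
  rcases (hpq ▸ hx : x ∈ ({r, s} : Set V)) with rfl | rfl
  · exact G.irrefl hxr
  · exact hrs hxr.symm

theorem card_aut_cycleGraph_four : Nat.card (cycleGraph 4 ≃g cycleGraph 4) = 8 := by
  rw [Nat.card_congr (autEquivSubtypePerm _), Nat.card_eq_fintype_card]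
  decide

end SimpleGraph

instance : DecidableRel squareWithTwoAdjacentTriangles.Adj := fun i j =>
  decidable_of_iff _ (SimpleGraph.fromRel_adj _ i j).symm

namespace squareWithTwoAdjacentTriangles

theorem injective_neighborSet :
    Function.Injective squareWithTwoAdjacentTriangles.neighborSet := by
  intro i j hij
  have hadj (t) :
      squareWithTwoAdjacentTriangles.Adj i t ↔ squareWithTwoAdjacentTriangles.Adj j t :=
    Set.ext_iff.1 hij t
  clear hij
  revert i j hadj
  decide

def squareEmbedding : SimpleGraph.cycleGraph 4 ↪g squareWithTwoAdjacentTriangles :=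
  ⟨Fin.castLEEmb (by norm_num), by decide⟩

set_option maxRecDepth 20000 in
theorem card_aut :
    Nat.card (squareWithTwoAdjacentTriangles ≃g squareWithTwoAdjacentTriangles) = 2 := by
  rw [Nat.card_congr (SimpleGraph.autEquivSubtypePerm _), Nat.card_eq_fintype_card]
  decide

end squareWithTwoAdjacentTriangles

namespace SimpleGraph.IsSRGWith

variable {V : Type*} [Fintype V] {G : SimpleGraph V} [DecidableRel G.Adj] {n k ℓ μ : ℕ}
  {a b c d : V}

theorem subsingleton_commonNeighbors (h : G.IsSRGWith n k 1 μ) (hab : G.Adj a b) :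
    (G.commonNeighbors a b).Subsingleton :=
  Set.subsingleton_coe _ |>.mp <| Fintype.card_le_one_iff_subsingleton.mp (h.of_adj a b hab).le

theorem exists_adj_adj_of_adj (h : G.IsSRGWith n k ℓ μ) (hℓ : 0 < ℓ) (hab : G.Adj a b) :
    ∃ x, G.Adj a x ∧ G.Adj b x := by
  obtain ⟨⟨x, hx⟩⟩ := Fintype.card_pos_iff.mp (h.of_adj a b hab ▸ hℓ)
  exact ⟨x, (mem_commonNeighbors G).1 hx⟩

theorem commonNeighbors_eq_pair (h : G.IsSRGWith n k ℓ 2) (hac : a ≠ c) (hnac : ¬G.Adj a c)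
    (hbd : b ≠ d) (hb : b ∈ G.commonNeighbors a c) (hd : d ∈ G.commonNeighbors a c) :
    G.commonNeighbors a c = {b, d} := by
  refine (Set.eq_of_subset_of_ncard_le (Set.insert_subset hb (Set.singleton_subset_iff.2 hd))
    ?_ (Set.toFinite _)).symm
  rw [Set.ncard_pair hbd, ← Nat.card_coe_set_eq, Nat.card_eq_fintype_card, h.of_not_adj hac hnac]

theorem not_adj_of_mem_commonNeighbors_s13 (h : G.IsSRGWith n k 1 μ) (hac : a ≠ c)
    (hb : b ∈ G.commonNeighbors a c) (hd : d ∈ G.commonNeighbors a c) : ¬G.Adj b d := by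
  rw [mem_commonNeighbors] at hb hd
  exact fun hbd => hac <| subsingleton_commonNeighbors h hbd
    ((mem_commonNeighbors G).2 ⟨hb.1.symm, hd.1.symm⟩)
    ((mem_commonNeighbors G).2 ⟨hb.2.symm, hd.2.symm⟩)

open squareWithTwoAdjacentTriangles in
theorem comp_squareEmbedding_injective (h : G.IsSRGWith n k 1 μ) :
    Function.Injective fun φ : squareWithTwoAdjacentTriangles ↪g G =>
      φ.comp squareEmbedding := by
  intro φ φ' hφφ'
  have hsquare (i : Fin 4) : φ (squareEmbedding i) = φ' (squareEmbedding i) :=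
    DFunLike.congr_fun hφφ' i
  have hapex {i j t : Fin 6} (hij : squareWithTwoAdjacentTriangles.Adj i j)
      (hit : squareWithTwoAdjacentTriangles.Adj i t)
      (hjt : squareWithTwoAdjacentTriangles.Adj j t)
      (hi : φ i = φ' i) (hj : φ j = φ' j) : φ t = φ' t :=
    subsingleton_commonNeighbors h (φ.map_adj_iff.2 hij)
      ((mem_commonNeighbors G).2 ⟨φ.map_adj_iff.2 hit, φ.map_adj_iff.2 hjt⟩)
      ((mem_commonNeighbors G).2 ⟨hi ▸ φ'.map_adj_iff.2 hit, hj ▸ φ'.map_adj_iff.2 hjt⟩)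
  ext t
  fin_cases t
  exacts [hsquare 0, hsquare 1, hsquare 2, hsquare 3,
    hapex (i := 0) (j := 1) (by decide) (by decide) (by decide) (hsquare 0) (hsquare 1),
    hapex (i := 1) (j := 2) (by decide) (by decide) (by decide) (hsquare 1) (hsquare 2)]

open squareWithTwoAdjacentTriangles in
theorem comp_squareEmbedding_surjective (h : G.IsSRGWith n k 1 2) :
    Function.Surjective fun φ : squareWithTwoAdjacentTriangles ↪g G =>
      φ.comp squareEmbedding := by
  intro ψ
  have hadj {i j : Fin 4} (hij : (cycleGraph 4).Adj i j) : G.Adj (ψ i) (ψ j) :=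
    ψ.map_adj_iff.2 hij
  have hnadj {i j : Fin 4} (hij : ¬(cycleGraph 4).Adj i j) : ¬G.Adj (ψ i) (ψ j) :=
    mt ψ.map_adj_iff.1 hij
  have hne {i j : Fin 4} (hij : i ≠ j) : ψ i ≠ ψ j := ψ.injective.ne hij
  have hab := hadj (i := 0) (j := 1) (by decide)
  have hbc := hadj (i := 1) (j := 2) (by decide)
  have hac := hnadj (i := 0) (j := 2) (by decide)
  have hbd := hnadj (i := 1) (j := 3) (by decide)
  have hca := hnadj (i := 2) (j := 0) (by decide)
  have hcn_ac : G.commonNeighbors (ψ 2) (ψ 0) = {ψ 1, ψ 3} :=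
    h.commonNeighbors_eq_pair (hne (by decide)) hca (hne (by decide))
      ⟨hadj (by decide), hadj (by decide)⟩ ⟨hadj (by decide), hadj (by decide)⟩
  have hcn_bd : G.commonNeighbors (ψ 1) (ψ 3) = {ψ 0, ψ 2} :=
    h.commonNeighbors_eq_pair (hne (by decide)) hbd (hne (by decide))
      ⟨hadj (by decide), hadj (by decide)⟩ ⟨hadj (by decide), hadj (by decide)⟩
  obtain ⟨e, hae, hbe⟩ := h.exists_adj_adj_of_adj one_pos hab
  obtain ⟨f, hbf, hcf⟩ := h.exists_adj_adj_of_adj one_pos hbc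
  have hce : ¬G.Adj (ψ 2) e := by
    rw [commonNeighbors_symm] at hcn_ac
    exact not_adj_of_commonNeighbors_eq_pair hcn_ac hbd hbe.symm hae
  have hde : ¬G.Adj (ψ 3) e := not_adj_of_commonNeighbors_eq_pair hcn_bd hac hae.symm hbe
  have haf : ¬G.Adj (ψ 0) f := not_adj_of_commonNeighbors_eq_pair hcn_ac hbd hbf.symm hcf
  have hdf : ¬G.Adj (ψ 3) f := by
    rw [Set.pair_comm] at hcn_bd
    exact not_adj_of_commonNeighbors_eq_pair hcn_bd hca hcf.symm hbf
  have hef : ¬G.Adj e f := fun hef => by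
    obtain rfl : ψ 0 = f :=
      h.subsingleton_commonNeighbors hbe.symm ⟨hae.symm, hab.symm⟩ ⟨hef, hbf⟩
    exact hac hcf.symm
  refine ⟨Embedding.ofAdjIff injective_neighborSet ![ψ 0, ψ 1, ψ 2, ψ 3, e, f] ?_, ?_⟩
  · have hcd := hadj (i := 2) (j := 3) (by decide)
    have hda := hadj (i := 3) (j := 0) (by decide)
    intro i j
    fin_cases i <;> fin_cases j <;>
      simp [hab, hbc, hcd, hda, hae, hbe, hbf, hcf, hab.symm, hbc.symm, hcd.symm, hda.symm,
        hae.symm, hbe.symm, hbf.symm, hcf.symm, hac, hbd, hce, hde, haf, hdf, hef, hca,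
        (mt Adj.symm hbd : ¬G.Adj (ψ 3) (ψ 1)), (mt Adj.symm hce : ¬G.Adj e (ψ 2)),
        (mt Adj.symm hde : ¬G.Adj e (ψ 3)), (mt Adj.symm haf : ¬G.Adj f (ψ 0)),
        (mt Adj.symm hdf : ¬G.Adj f (ψ 3)), (mt Adj.symm hef : ¬G.Adj f e)] <;> decide
  · ext i
    fin_cases i <;> rfl

theorem card_embedding_cycleGraph_four_with_diagonal (h : G.IsSRGWith n k 1 2) (hac : a ≠ c)
    (hnac : ¬G.Adj a c) : Nat.card {ψ : cycleGraph 4 ↪g G // ψ 0 = a ∧ ψ 2 = c} = 2 := by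
  have hmem (ψ : {ψ : cycleGraph 4 ↪g G // ψ 0 = a ∧ ψ 2 = c}) (i : Fin 4)
      (hi : i = 1 ∨ i = 3) : ψ.1 i ∈ G.commonNeighbors a c := by
    obtain ⟨ψ, rfl, rfl⟩ := ψ
    rcases hi with rfl | rfl
    exacts [⟨ψ.map_adj_iff.2 (by decide), ψ.map_adj_iff.2 (by decide)⟩,
      ⟨ψ.map_adj_iff.2 (by decide), ψ.map_adj_iff.2 (by decide)⟩]
  rw [← h.of_not_adj hac hnac, ← Nat.card_eq_fintype_card]
  refine Nat.card_eq_of_bijective (fun ψ => ⟨ψ.1 1, hmem ψ 1 (.inl rfl)⟩) ⟨?_, ?_⟩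
  · rintro ψ ψ' hψψ'
    replace hψψ' : ψ.1 1 = ψ'.1 1 := congrArg Subtype.val hψψ'
    have hcn := h.commonNeighbors_eq_pair hac hnac (ψ'.1.injective.ne (by decide))
      (hmem ψ' 1 (.inl rfl)) (hmem ψ' 3 (.inr rfl))
    have h3 : ψ.1 3 = ψ'.1 3 := by
      rcases (hcn ▸ hmem ψ 3 (.inr rfl) : ψ.1 3 ∈ ({ψ'.1 1, ψ'.1 3} : Set V)) with h3 | h3
      · exact absurd (hψψ'.trans h3.symm) (ψ.1.injective.ne (by decide))
      · exact h3
    refine Subtype.ext (DFunLike.ext _ _ fun i => ?_)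
    fin_cases i
    exacts [ψ.2.1.trans ψ'.2.1.symm, hψψ', ψ.2.2.trans ψ'.2.2.symm, h3]
  · rintro ⟨b, hb⟩
    have : 1 < Fintype.card (G.commonNeighbors a c) := by rw [h.of_not_adj hac hnac]; norm_num
    obtain ⟨⟨d, hd⟩, hdb⟩ := Fintype.exists_ne_of_one_lt_card this ⟨b, hb⟩
    have hbd' : b ≠ d := fun hbd => hdb (Subtype.ext hbd.symm)
    exact ⟨⟨cycleGraphFourEmbedding hb.1 hb.2.symm hd.2 hd.1.symm hnac
      (h.not_adj_of_mem_commonNeighbors_s13 hac hb hd) hac hbd', rfl, rfl⟩, rfl⟩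

theorem card_embedding_cycleGraph_four (h : G.IsSRGWith n k 1 2) :
    Nat.card (cycleGraph 4 ↪g G) = 2 * (n * (n - k - 1)) := by
  classical
  let diagonal (ψ : cycleGraph 4 ↪g G) : Gᶜ.Dart :=
    ⟨(ψ 0, ψ 2),
      (compl_adj G _ _).2 ⟨ψ.injective.ne (by decide), mt ψ.map_adj_iff.1 (by decide)⟩⟩
  have hfiber (δ : Gᶜ.Dart) : Nat.card {ψ // diagonal ψ = δ} = 2 := by
    obtain ⟨hne, hnadj⟩ := (compl_adj G _ _).1 δ.adj
    rw [← h.card_embedding_cycleGraph_four_with_diagonal hne hnadj]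
    exact Nat.card_congr <| Equiv.subtypeEquivRight fun ψ => by
      simp [diagonal, Dart.ext_iff, Prod.ext_iff]
  rw [← Nat.card_congr (Equiv.sigmaFiberEquiv diagonal), Nat.card_sigma,
    Finset.sum_congr rfl fun δ _ => hfiber δ, Finset.sum_const, smul_eq_mul, Finset.card_univ,
    dart_card_eq_sum_degrees]
  simp [h.compl_is_regular.degree_eq, h.card]
  ring

end SimpleGraph.IsSRGWith

theorem stmt_13 {V : Type*} [Fintype V] (G : SimpleGraph V) [DecidableRel G.Adj]
    {n k : ℕ} (h : G.IsSRGWith n k 1 2) :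
    2 * Set.ncard {s : Finset V | s.card = 6 ∧
        Nonempty (G.induce (↑s : Set V) ≃g squareWithTwoAdjacentTriangles)} =
      n * k * (k - 2) ∧
    Set.ncard {s : Finset V | s.card = 6 ∧
        Nonempty (G.induce (↑s : Set V) ≃g squareWithTwoAdjacentTriangles)} =
      4 * inducedCycleCount G 4 := by
  have hsquare :=
    SimpleGraph.card_embedding_eq_card_iso_mul_ncard (G := G) (H := SimpleGraph.cycleGraph 4)
  have htriangles := SimpleGraph.card_embedding_eq_card_iso_mul_ncard (G := G)
    (H := squareWithTwoAdjacentTriangles)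
  rw [SimpleGraph.card_aut_cycleGraph_four, Fintype.card_fin,
    h.card_embedding_cycleGraph_four] at hsquare
  rw [squareWithTwoAdjacentTriangles.card_aut, Fintype.card_fin,
    Nat.card_eq_of_bijective _
      ⟨h.comp_squareEmbedding_injective, h.comp_squareEmbedding_surjective⟩,
    h.card_embedding_cycleGraph_four] at htriangles
  refine ⟨?_, by unfold inducedCycleCount; omega⟩
  rcases n.eq_zero_or_pos with rfl | hn
  · simpa using htriangles.symm
  · have hparam := SimpleGraph.IsSRGWith.param_eq G h hn
    calc _ = n * ((n - k - 1) * 2) := by rw [← htriangles]; ring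
      _ = n * k * (k - 2) := by rw [← hparam, mul_assoc, Nat.sub_sub]
end
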